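/- arXiv:1808.06204 — 2 statements merged into one kernel-verified Lean document; each statement's English description precedes it below -/
import Mathlib

section
/- Let P : ℝ^N × ℝ → ℝ and Q : ℝ → ℝ be continuous with P(x,s)/Q(s) → 0 uniformly in x as |s| → ∞. Let (u_n) be measurable functions ℝ^N → ℝ with sup_n ∫_{ℝ^N} |Q(u_n(x))| dx < ∞ and P(x, u_n(x)) → v(x) a.e. in ℝ^N. Then for any bounded Borel set B ⊂ ℝ^N, ∫_B |P(x, u_n(x)) − v(x)| dx → 0 as n → ∞. -/
open MeasureTheory Filter Topology

open scoped ENNReal NNReal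

/-!
On a bounded set `B`, continuity of `P` on the compact set `closure B × [-M, M]` together with the
growth condition gives `|P(x, s)| ≤ η |Q(s)| + K_η` for every `η > 0`. As `Q ∘ u_n` is bounded in
`L¹`, the functions `P(·, u_n)` are uniformly integrable on `B`, and Vitali's convergence theorem
upgrades their a.e. convergence to convergence in `L¹(B)`.
-/

theorem exists_abs_le_mul_add_of_isCompact {X : Type*} [TopologicalSpace X] {P : X → ℝ → ℝ}
    {Q : ℝ → ℝ} (hP : Continuous fun q : X × ℝ => P q.1 q.2) {S : Set X} (hS : IsCompact S)
    {η M : ℝ} (hη : 0 ≤ η) (hM : ∀ x s, M ≤ |s| → |P x s| ≤ η * |Q s|) :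
    ∃ K, ∀ x ∈ S, ∀ s, |P x s| ≤ η * |Q s| + K := by
  obtain ⟨K, hK⟩ := (hS.prod (isCompact_Icc (a := -M) (b := M))).exists_bound_of_continuousOn
    hP.continuousOn
  refine ⟨max K 0, fun x hx s => ?_⟩
  have hηQ : 0 ≤ η * |Q s| := by positivity
  rcases le_or_gt M |s| with hs | hs
  · linarith [hM x s hs, le_max_right K 0]
  · have hxs : (x, s) ∈ S ×ˢ Set.Icc (-M) M := ⟨hx, abs_le.mp hs.le⟩
    linarith [hK _ hxs, le_max_left K 0, Real.norm_eq_abs (P x s)]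

section

variable {α : Type*} [MeasurableSpace α] {μ : Measure α}

theorem eLpNorm_one_le_of_abs_le_mul_add {f g : α → ℝ} {η K : ℝ} (hη : 0 ≤ η)
    (hfg : ∀ᵐ x ∂μ, |f x| ≤ η * |g x| + K) :
    eLpNorm f 1 μ ≤ ENNReal.ofReal η * eLpNorm g 1 μ + ENNReal.ofReal K * μ Set.univ := by
  simp only [eLpNorm_one_eq_lintegral_enorm]
  calc ∫⁻ x, ‖f x‖ₑ ∂μ ≤ ∫⁻ x, (ENNReal.ofReal η * ‖g x‖ₑ + ENNReal.ofReal K) ∂μ := by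
        refine lintegral_mono_ae (hfg.mono fun x hx => ?_)
        rw [← ofReal_norm, ← ofReal_norm, ← ENNReal.ofReal_mul hη]
        exact (ENNReal.ofReal_le_ofReal hx).trans ENNReal.ofReal_add_le
    _ = _ := by
        rw [lintegral_add_right _ measurable_const, lintegral_const_mul' _ _ ENNReal.ofReal_ne_top,
          lintegral_const]

theorem uniformIntegrable_of_abs_le_mul_add [IsFiniteMeasure μ] {ι : Type*} {f g : ι → α → ℝ}
    {C : ℝ≥0} (hf : ∀ i, AEStronglyMeasurable (f i) μ) (hg : ∀ i, eLpNorm (g i) 1 μ ≤ C)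
    (hfg : ∀ η > (0 : ℝ), ∃ K, ∀ i, ∀ᵐ x ∂μ, |f i x| ≤ η * |g i x| + K) :
    UniformIntegrable f 1 μ := by
  refine ⟨hf, fun ε hε => ?_, ?_⟩
  · set η := ε / (2 * (C + 1))
    obtain ⟨K, hK⟩ := hfg η (by positivity)
    set δ := ε / (2 * (|K| + 1))
    refine ⟨δ, by positivity, fun i s hs hμs => ?_⟩
    have hηC : η * C ≤ ε / 2 := calc
      η * C ≤ η * (C + 1) := by gcongr; linarith
      _ = ε / 2 := by simp only [η]; field_simp
    have hKδ : K * δ ≤ ε / 2 := calc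
      K * δ ≤ (|K| + 1) * δ := by gcongr; linarith [le_abs_self K]
      _ = ε / 2 := by simp only [δ]; field_simp
    rw [eLpNorm_indicator_eq_eLpNorm_restrict hs]
    calc eLpNorm (f i) 1 (μ.restrict s)
        ≤ ENNReal.ofReal η * eLpNorm (g i) 1 (μ.restrict s) + ENNReal.ofReal K * μ s := by
          simpa using eLpNorm_one_le_of_abs_le_mul_add (by positivity) (ae_restrict_of_ae (hK i))
      _ ≤ ENNReal.ofReal η * ENNReal.ofReal C + ENNReal.ofReal K * ENNReal.ofReal δ := by
          gcongr
          exact (eLpNorm_mono_measure _ Measure.restrict_le_self).trans (by simpa using hg i)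
      _ ≤ ENNReal.ofReal (ε / 2) + ENNReal.ofReal (ε / 2) := by
          rw [← ENNReal.ofReal_mul (by positivity), ← ENNReal.ofReal_mul' (by positivity)]
          gcongr
      _ = ENNReal.ofReal ε := by
          rw [← ENNReal.ofReal_add (by positivity) (by positivity), add_halves]
  · obtain ⟨K, hK⟩ := hfg 1 one_pos
    refine ⟨C + K.toNNReal * (μ Set.univ).toNNReal, fun i => ?_⟩
    calc eLpNorm (f i) 1 μ ≤ ENNReal.ofReal 1 * eLpNorm (g i) 1 μ + ENNReal.ofReal K * μ Set.univ :=
          eLpNorm_one_le_of_abs_le_mul_add zero_le_one (hK i)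
      _ ≤ _ := by
          rw [ENNReal.ofReal_one, one_mul, ENNReal.coe_add, ENNReal.coe_mul,
            ENNReal.coe_toNNReal (measure_ne_top μ _)]
          gcongr
          · exact hg i
          · rfl

end

theorem stmt5_general (N : ℕ) (P : EuclideanSpace ℝ (Fin N) → ℝ → ℝ) (Q : ℝ → ℝ)
    (hP : Continuous fun q : (EuclideanSpace ℝ (Fin N)) × ℝ => P q.1 q.2)
    (hlim : ∀ ε > (0 : ℝ), ∃ M > (0 : ℝ), ∀ x s, M ≤ |s| → |P x s| ≤ ε * |Q s|)
    (u : ℕ → EuclideanSpace ℝ (Fin N) → ℝ)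
    (hmeas : ∀ n, Measurable (u n))
    (hint : ∀ n, Integrable (fun x => Q (u n x)))
    (C : ℝ) (hsup : ∀ n, (∫ x, |Q (u n x)|) ≤ C)
    (v : EuclideanSpace ℝ (Fin N) → ℝ)
    (hae : ∀ᵐ x ∂(volume : Measure (EuclideanSpace ℝ (Fin N))),
      Tendsto (fun n => P x (u n x)) atTop (𝓝 (v x)))
    (B : Set (EuclideanSpace ℝ (Fin N)))
    (hBb : Bornology.IsBounded B) :
    Tendsto (fun n => ∫ x in B, |P x (u n x) - v x|) atTop (𝓝 0) := by
  have : IsFiniteMeasure (volume.restrict B) := isFiniteMeasure_restrict.2 hBb.measure_lt_top.ne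
  have hQ_L1 (n : ℕ) : eLpNorm (fun x => Q (u n x)) 1 (volume.restrict B) ≤ C.toNNReal := calc
    _ ≤ eLpNorm (fun x => Q (u n x)) 1 volume := eLpNorm_mono_measure _ Measure.restrict_le_self
    _ = ENNReal.ofReal (∫ x, |Q (u n x)|) := by
      simp only [eLpNorm_one_eq_lintegral_enorm, ← ofReal_integral_norm_eq_lintegral_enorm (hint n),
        Real.norm_eq_abs]
    _ ≤ C.toNNReal := ENNReal.ofReal_le_ofReal (hsup n)
  have hdom (η : ℝ) (hη : 0 < η) : ∃ K, ∀ n, ∀ᵐ x ∂(volume.restrict B),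
      |P x (u n x)| ≤ η * |Q (u n x)| + K := by
    obtain ⟨M, -, hM⟩ := hlim η hη
    obtain ⟨K, hK⟩ := exists_abs_le_mul_add_of_isCompact hP hBb.isCompact_closure hη.le hM
    refine ⟨K, fun n => ae_mono (Measure.restrict_mono subset_closure le_rfl) ?_⟩
    exact ae_restrict_of_forall_mem isClosed_closure.measurableSet fun x hx => hK x hx _
  have hUI : UniformIntegrable (fun n x => P x (u n x)) 1 (volume.restrict B) :=
    uniformIntegrable_of_abs_le_mul_add
      (fun n => (hP.measurable.comp (measurable_id.prodMk (hmeas n))).aestronglyMeasurable)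
      hQ_L1 hdom
  have hv : MemLp v 1 (volume.restrict B) := hUI.memLp_of_ae_tendsto (ae_restrict_of_ae hae)
  have hL1 := tendsto_Lp_finite_of_tendsto_ae le_rfl ENNReal.one_ne_top hUI.1 hv hUI.2.1
    (ae_restrict_of_ae hae)
  refine ((ENNReal.tendsto_toReal ENNReal.zero_ne_top).comp hL1).congr fun n => ?_
  simp only [Function.comp_apply, toReal_eLpNorm ((hUI.1 n).sub hv.1),
    lpNorm_one_eq_integral_norm ((hUI.1 n).sub hv.1), Pi.sub_apply, Real.norm_eq_abs]

/-- Strauss-type compactness lemma, first part: if `P(x,s)/Q(s) → 0`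
uniformly in `x` as `|s| → ∞`, `sup_n ∫ |Q(u_n)| < ∞` and `P(x,u_n(x)) → v(x)` a.e.,
then `∫_B |P(x,u_n(x)) − v(x)| dx → 0` for every bounded Borel set `B`. -/
theorem stmt5 (N : ℕ) (P : EuclideanSpace ℝ (Fin N) → ℝ → ℝ) (Q : ℝ → ℝ)
    (hP : Continuous fun q : (EuclideanSpace ℝ (Fin N)) × ℝ => P q.1 q.2)
    (hQ : Continuous Q)
    (hlim : ∀ ε > (0 : ℝ), ∃ M > (0 : ℝ), ∀ x s, M ≤ |s| → |P x s| ≤ ε * |Q s|)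
    (u : ℕ → EuclideanSpace ℝ (Fin N) → ℝ)
    (hmeas : ∀ n, Measurable (u n))
    (hint : ∀ n, Integrable (fun x => Q (u n x)))
    (C : ℝ) (hsup : ∀ n, (∫ x, |Q (u n x)|) ≤ C)
    (v : EuclideanSpace ℝ (Fin N) → ℝ) (hv : Measurable v)
    (hae : ∀ᵐ x ∂(volume : Measure (EuclideanSpace ℝ (Fin N))),
      Tendsto (fun n => P x (u n x)) atTop (𝓝 (v x)))
    (B : Set (EuclideanSpace ℝ (Fin N))) (hBm : MeasurableSet B)
    (hBb : Bornology.IsBounded B) :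
    Tendsto (fun n => ∫ x in B, |P x (u n x) - v x|) atTop (𝓝 0) :=
  stmt5_general N P Q hP hlim u hmeas hint C hsup v hae B hBb
end

section
/- Under the hypotheses of the preceding Strauss-type lemma, assume additionally that P(x,s)/Q(s) → 0 uniformly in x as s → 0, and that u_n(x) → 0 as |x| → ∞ uniformly with respect to n. Then P(·, u_n(·)) converges to v in L¹(ℝ^N) as n → ∞. -/
open MeasureTheory Filter Topology

/-!
For every `ε > 0` the hypotheses on `P` give an integrable `h_ε`, a constant on a large ball, with
`|P(x, u_n x)| ≤ ε |Q(u_n x)| + h_ε x` for all `n`: outside the ball `u_n` is small, and inside it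
either `|u_n|` is large or `P` is evaluated on a compact set. Fatou's lemma then makes `v`
integrable. Finally `|P(·, u_n) - v| ≤ (|P(·, u_n) - v| - ε |Q(u_n)|)⁺ + ε |Q(u_n)|`; the first
term, dominated by `|h_ε| + |v|`, tends to `0` in `L¹` by dominated convergence, and the second has
integral at most `ε C`.
-/

section Convergence

variable {α : Type*} [MeasurableSpace α] {μ : Measure α}

theorem integrable_of_tendsto_ae_of_integral_abs_le {f : ℕ → α → ℝ} {v : α → ℝ} {B : ℝ}
    (hf : ∀ n, Integrable (f n) μ) (hB : ∀ n, ∫ x, |f n x| ∂μ ≤ B)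
    (hlim : ∀ᵐ x ∂μ, Tendsto (fun n => f n x) atTop (𝓝 (v x))) :
    Integrable v μ := by
  refine memLp_one_iff_integrable.1 ⟨aestronglyMeasurable_of_tendsto_ae _ (fun n => (hf n).1) hlim,
    (Lp.eLpNorm_le_of_ae_tendsto (C := ENNReal.ofReal B) (Eventually.of_forall fun n => ?_)
      (fun n => (hf n).1) hlim).trans_lt ENNReal.ofReal_lt_top⟩
  rw [eLpNorm_one_eq_lintegral_enorm, ← ofReal_integral_norm_eq_lintegral_enorm (hf n)]
  exact ENNReal.ofReal_le_ofReal (hB n)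

theorem integrable_of_abs_le_mul_add {f g h : α → ℝ} {ε : ℝ} (hf : AEStronglyMeasurable f μ)
    (hg : Integrable g μ) (hh : Integrable h μ) (hle : ∀ x, |f x| ≤ ε * |g x| + h x) :
    Integrable f μ :=
  ((hg.abs.const_mul ε).add hh).mono' hf (ae_of_all _ hle)

variable {f g : ℕ → α → ℝ} {v h : α → ℝ} {ε : ℝ}

theorem tendsto_integral_max_abs_sub_sub_mul_zero (hε : 0 ≤ ε)
    (hf : ∀ n, AEStronglyMeasurable (f n) μ) (hg : ∀ n, AEStronglyMeasurable (g n) μ)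
    (hv : Integrable v μ) (hh : Integrable h μ) (hle : ∀ n x, |f n x| ≤ ε * |g n x| + h x)
    (hlim : ∀ᵐ x ∂μ, Tendsto (fun n => f n x) atTop (𝓝 (v x))) :
    Tendsto (fun n => ∫ x, max (|f n x - v x| - ε * |g n x|) 0 ∂μ) atTop (𝓝 0) := by
  have hbound : ∀ n x, max (|f n x - v x| - ε * |g n x|) 0 ≤ |h x| + |v x| := fun n x =>
    max_le (by linarith [abs_sub (f n x) (v x), hle n x, le_abs_self (h x)]) (by positivity)
  simpa only [integral_zero] using tendsto_integral_of_dominated_convergence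
    (F := fun n x => max (|f n x - v x| - ε * |g n x|) 0) (f := fun _ => 0) (fun x => |h x| + |v x|)
    (fun n => (((hf n).sub hv.1).norm.sub ((hg n).norm.const_mul ε)).sup aestronglyMeasurable_const)
    (hh.abs.add hv.abs)
    (fun n => ae_of_all _ fun x => by
      rw [Real.norm_eq_abs, abs_of_nonneg (le_max_right _ _)]; exact hbound n x)
    (hlim.mono fun x hx => by
      have hsub : Tendsto (fun n => |f n x - v x|) atTop (𝓝 0) := by
        simpa using (hx.sub_const (v x)).abs
      refine squeeze_zero (fun n => le_max_right _ _) (fun n => max_le ?_ (abs_nonneg _)) hsub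
      have := mul_nonneg hε (abs_nonneg (g n x))
      linarith)

theorem tendsto_integral_abs_sub_of_tendsto_ae_of_abs_le_mul_add {C : ℝ}
    (hf : ∀ n, AEStronglyMeasurable (f n) μ) (hg : ∀ n, Integrable (g n) μ)
    (hC : ∀ n, ∫ x, |g n x| ∂μ ≤ C)
    (hdom : ∀ ε > 0, ∃ h : α → ℝ, Integrable h μ ∧ ∀ n x, |f n x| ≤ ε * |g n x| + h x)
    (hlim : ∀ᵐ x ∂μ, Tendsto (fun n => f n x) atTop (𝓝 (v x))) :
    Integrable v μ ∧ Tendsto (fun n => ∫ x, |f n x - v x| ∂μ) atTop (𝓝 0) := by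
  have hv : Integrable v μ := by
    obtain ⟨h, hh, hle⟩ := hdom 1 one_pos
    have hfi n := integrable_of_abs_le_mul_add (hf n) (hg n) hh (hle n)
    refine integrable_of_tendsto_ae_of_integral_abs_le (B := C + ∫ x, h x ∂μ) hfi (fun n => ?_) hlim
    calc ∫ x, |f n x| ∂μ ≤ ∫ x, 1 * |g n x| + h x ∂μ :=
          integral_mono (hfi n).abs (((hg n).abs.const_mul 1).add hh) (hle n)
      _ ≤ C + ∫ x, h x ∂μ := by
          rw [integral_add ((hg n).abs.const_mul 1) hh, integral_const_mul, one_mul]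
          linarith [hC n]
  refine ⟨hv, tendsto_order.2 ⟨fun a ha => Eventually.of_forall fun n =>
    ha.trans_le (integral_nonneg fun _ => abs_nonneg _), fun a ha => ?_⟩⟩
  set ε := a / (2 * (|C| + 1)) with hε_def
  have hε : 0 < ε := by positivity
  have hεC : ε * C < a / 2 := by
    rw [hε_def, div_mul_eq_mul_div, div_lt_div_iff₀ (by positivity) two_pos]
    nlinarith [le_abs_self C]
  obtain ⟨h, hh, hle⟩ := hdom ε hε
  have hexcess := tendsto_integral_max_abs_sub_sub_mul_zero hε.le hf (fun n => (hg n).1) hv hh hle hlim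
  filter_upwards [(tendsto_order.1 hexcess).2 (a / 2) (half_pos ha)] with n hn
  have hdiff : Integrable (fun x => |f n x - v x|) μ :=
    ((integrable_of_abs_le_mul_add (hf n) (hg n) hh (hle n)).sub hv).abs
  have hexcess_int : Integrable (fun x => max (|f n x - v x| - ε * |g n x|) 0) μ :=
    (hdiff.sub ((hg n).abs.const_mul ε)).sup (integrable_zero _ _ μ)
  calc ∫ x, |f n x - v x| ∂μ ≤ ∫ x, max (|f n x - v x| - ε * |g n x|) 0 + ε * |g n x| ∂μ :=
        integral_mono hdiff (hexcess_int.add ((hg n).abs.const_mul ε))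
          fun x => by linarith [le_max_left (|f n x - v x| - ε * |g n x|) 0]
    _ = ∫ x, max (|f n x - v x| - ε * |g n x|) 0 ∂μ + ε * ∫ x, |g n x| ∂μ := by
        rw [integral_add hexcess_int ((hg n).abs.const_mul ε), integral_const_mul]
    _ < a := by nlinarith [hC n]

end Convergence

open Metric Set in
theorem exists_integrable_abs_comp_le_mul_add {E ι : Type*} [NormedAddCommGroup E] [ProperSpace E]
    [MeasurableSpace E] [OpensMeasurableSpace E] {μ : Measure E} [IsFiniteMeasureOnCompacts μ]
    {P : E → ℝ → ℝ} {Q : ℝ → ℝ} {u : ι → E → ℝ} (hP : Continuous fun q : E × ℝ => P q.1 q.2)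
    (hlim : ∀ ε > (0 : ℝ), ∃ M > (0 : ℝ), ∀ x s, M ≤ |s| → |P x s| ≤ ε * |Q s|)
    (hlim0 : ∀ ε > (0 : ℝ), ∃ δ > (0 : ℝ), ∀ x s, |s| ≤ δ → |P x s| ≤ ε * |Q s|)
    (hdecay : ∀ δ > (0 : ℝ), ∃ R > (0 : ℝ), ∀ n, ∀ x : E, R ≤ ‖x‖ → |u n x| ≤ δ)
    {ε : ℝ} (hε : 0 < ε) :
    ∃ h : E → ℝ, Integrable h μ ∧ ∀ n x, |P x (u n x)| ≤ ε * |Q (u n x)| + h x := by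
  obtain ⟨M, -, hM⟩ := hlim ε hε
  obtain ⟨δ, hδ, hδle⟩ := hlim0 ε hε
  obtain ⟨R, -, hR⟩ := hdecay δ hδ
  obtain ⟨K, hK⟩ := ((isCompact_closedBall (0 : E) R).prod (isCompact_Icc (a := -M) (b := M)))
    |>.exists_bound_of_continuousOn hP.continuousOn
  refine ⟨(closedBall 0 R).indicator fun _ => max K 0,
    (integrable_indicator_iff measurableSet_closedBall).2
      (integrableOn_const (isCompact_closedBall _ _).measure_lt_top.ne), fun n x => ?_⟩
  have hind : 0 ≤ (closedBall 0 R).indicator (fun _ => max K 0) x :=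
    indicator_nonneg (fun _ _ => le_max_right _ _) x
  have hεQ : 0 ≤ ε * |Q (u n x)| := by positivity
  by_cases hx : R ≤ ‖x‖
  · linarith [hδle x _ (hR n x hx)]
  have hxB : x ∈ closedBall 0 R := mem_closedBall_zero_iff.2 (not_le.1 hx).le
  rw [indicator_of_mem hxB]
  by_cases hs : M ≤ |u n x|
  · linarith [hM x _ hs, le_max_right K 0]
  · have hPK := hK (x, u n x) ⟨hxB, abs_le.1 (not_le.1 hs).le⟩
    rw [Real.norm_eq_abs] at hPK
    linarith [le_max_left K 0]

theorem stmt6_general (N : ℕ) (P : EuclideanSpace ℝ (Fin N) → ℝ → ℝ) (Q : ℝ → ℝ)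
    (hP : Continuous fun q : (EuclideanSpace ℝ (Fin N)) × ℝ => P q.1 q.2)
    (hlim : ∀ ε > (0 : ℝ), ∃ M > (0 : ℝ), ∀ x s, M ≤ |s| → |P x s| ≤ ε * |Q s|)
    (hlim0 : ∀ ε > (0 : ℝ), ∃ δ > (0 : ℝ), ∀ x s, |s| ≤ δ → |P x s| ≤ ε * |Q s|)
    (u : ℕ → EuclideanSpace ℝ (Fin N) → ℝ)
    (hmeas : ∀ n, Measurable (u n))
    (hint : ∀ n, Integrable (fun x => Q (u n x)))
    (C : ℝ) (hsup : ∀ n, (∫ x, |Q (u n x)|) ≤ C)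
    (v : EuclideanSpace ℝ (Fin N) → ℝ)
    (hae : ∀ᵐ x ∂(volume : Measure (EuclideanSpace ℝ (Fin N))),
      Tendsto (fun n => P x (u n x)) atTop (𝓝 (v x)))
    (hdecay : ∀ δ > (0 : ℝ), ∃ R > (0 : ℝ), ∀ n, ∀ x : EuclideanSpace ℝ (Fin N),
      R ≤ ‖x‖ → |u n x| ≤ δ) :
    Integrable v ∧
      Tendsto (fun n => ∫ x, |P x (u n x) - v x|) atTop (𝓝 0) :=
  tendsto_integral_abs_sub_of_tendsto_ae_of_abs_le_mul_add (g := fun n x => Q (u n x))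
    (fun n => (hP.measurable.comp (measurable_id.prodMk (hmeas n))).aestronglyMeasurable)
    hint hsup (fun _ hε => exists_integrable_abs_comp_le_mul_add hP hlim hlim0 hdecay hε) hae

/-- Strauss-type compactness lemma, second part: under the hypotheses of the
first part, if moreover `P(x,s)/Q(s) → 0` uniformly in `x` as `s → 0` and `u_n(x) → 0` as
`|x| → ∞` uniformly in `n`, then `P(·,u_n(·)) → v` in `L¹(ℝ^N)`. -/
theorem stmt6 (N : ℕ) (P : EuclideanSpace ℝ (Fin N) → ℝ → ℝ) (Q : ℝ → ℝ)
    (hP : Continuous fun q : (EuclideanSpace ℝ (Fin N)) × ℝ => P q.1 q.2)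
    (hQ : Continuous Q)
    (hlim : ∀ ε > (0 : ℝ), ∃ M > (0 : ℝ), ∀ x s, M ≤ |s| → |P x s| ≤ ε * |Q s|)
    (hlim0 : ∀ ε > (0 : ℝ), ∃ δ > (0 : ℝ), ∀ x s, |s| ≤ δ → |P x s| ≤ ε * |Q s|)
    (u : ℕ → EuclideanSpace ℝ (Fin N) → ℝ)
    (hmeas : ∀ n, Measurable (u n))
    (hint : ∀ n, Integrable (fun x => Q (u n x)))
    (C : ℝ) (hsup : ∀ n, (∫ x, |Q (u n x)|) ≤ C)
    (v : EuclideanSpace ℝ (Fin N) → ℝ) (hv : Measurable v)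
    (hae : ∀ᵐ x ∂(volume : Measure (EuclideanSpace ℝ (Fin N))),
      Tendsto (fun n => P x (u n x)) atTop (𝓝 (v x)))
    (hdecay : ∀ δ > (0 : ℝ), ∃ R > (0 : ℝ), ∀ n, ∀ x : EuclideanSpace ℝ (Fin N),
      R ≤ ‖x‖ → |u n x| ≤ δ) :
    Integrable v ∧
      Tendsto (fun n => ∫ x, |P x (u n x) - v x|) atTop (𝓝 0) :=
  stmt6_general N P Q hP hlim hlim0 u hmeas hint C hsup v hae hdecay
end
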